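/- Let q be a ℂ-dual quaternion with (I·1 + 𝐢)·q = 0. Write the coordinates of q in the basis 1, 𝐢, 𝐣, 𝐤, ε, ε𝐢, ε𝐣, ε𝐤. Suppose the coefficient of 1 is zero, the coefficient of ε is zero, the coefficient of 𝐣 is nonzero, and x₀ ∈ ℂ satisfies x₀·(coefficient of 𝐣 of q) = (coefficient of ε𝐣 of q). Then there exists a ∈ ℂ, a ≠ 0, such that q = a·(1 + x₀·ε)·(𝐣 + I·𝐤). -/

import Mathlib

open Quaternion TrivSqZeroExt DualNumber

noncomputable section

/-- The ℂ-dual quaternions. -/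
abbrev DQ : Type := DualNumber (Quaternion ℂ)

/-- The quaternion unit 𝐢, viewed as a dual quaternion. -/
def qi : DQ := inl (⟨0,1,0,0⟩ : ℍ[ℂ])
/-- The quaternion unit 𝐣, viewed as a dual quaternion. -/
def qj : DQ := inl (⟨0,0,1,0⟩ : ℍ[ℂ])
/-- The quaternion unit 𝐤, viewed as a dual quaternion. -/
def qk : DQ := inl (⟨0,0,0,1⟩ : ℍ[ℂ])

/-- A complex scalar, viewed as a dual quaternion. -/
def cs (a : ℂ) : DQ := inl (algebraMap ℂ ℍ[ℂ] a)

/-!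
Write `q = p + εp'`. Since `I + 𝐢` has no `ε`-part, `(I + 𝐢)q = 0` splits into `(I + 𝐢)p = 0` and
`(I + 𝐢)p' = 0`. The `𝐢`- and `𝐤`-coordinates of `(I + 𝐢)p` are `I p_𝐢 + p₀` and `I p_𝐤 + p_𝐣`,
so a quaternion with zero scalar part annihilated by `I + 𝐢` is `p_𝐣 (𝐣 + I𝐤)`. Hence
`p = a(𝐣 + I𝐤)` and `p' = a x₀ (𝐣 + I𝐤)` with `a = p_𝐣`, which is `a(1 + x₀ε)(𝐣 + I𝐤)`.
-/

-- `simp` cannot see through the definitions of `qi`, `qj`, `qk`: their literals elaborate at type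
-- `QuaternionAlgebra ℂ (-1) 0 (-1)` rather than `ℍ[ℂ]`, so lemmas such as `fst_inl` do not fire.
@[simp] lemma fst_qi_re : (fst qi).re = 0 := rfl
@[simp] lemma fst_qi_imI : (fst qi).imI = 1 := rfl
@[simp] lemma fst_qi_imJ : (fst qi).imJ = 0 := rfl
@[simp] lemma fst_qi_imK : (fst qi).imK = 0 := rfl
@[simp] lemma snd_qi : snd qi = 0 := rfl
@[simp] lemma fst_qj_re : (fst qj).re = 0 := rfl
@[simp] lemma fst_qj_imI : (fst qj).imI = 0 := rfl
@[simp] lemma fst_qj_imJ : (fst qj).imJ = 1 := rfl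
@[simp] lemma fst_qj_imK : (fst qj).imK = 0 := rfl
@[simp] lemma snd_qj : snd qj = 0 := rfl
@[simp] lemma fst_qk_re : (fst qk).re = 0 := rfl
@[simp] lemma fst_qk_imI : (fst qk).imI = 0 := rfl
@[simp] lemma fst_qk_imJ : (fst qk).imJ = 0 := rfl
@[simp] lemma fst_qk_imK : (fst qk).imK = 1 := rfl
@[simp] lemma snd_qk : snd qk = 0 := rfl
@[simp] lemma fst_cs (a : ℂ) : fst (cs a) = a := rfl
@[simp] lemma snd_cs (a : ℂ) : snd (cs a) = 0 := rfl

theorem DualNumber.mul_eq_zero_iff_of_snd_eq_zero {R : Type*} [Semiring R] {x : R[ε]}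
    (hx : snd x = 0) (q : R[ε]) : x * q = 0 ↔ fst x * fst q = 0 ∧ fst x * snd q = 0 := by
  simp only [TrivSqZeroExt.ext_iff, fst_mul, DualNumber.snd_mul, hx, zero_mul, add_zero,
    fst_zero, snd_zero]

theorem eq_imJ_smul_of_I_add_i_mul_eq_zero {p : ℍ[ℂ]} (h : fst (cs Complex.I + qi) * p = 0)
    (hre : p.re = 0) : p = p.imJ • fst (qj + cs Complex.I * qk) := by
  have hI : Complex.I * p.imI + p.re = 0 := by simpa using congrArg QuaternionAlgebra.imI h
  have hK : Complex.I * p.imK + p.imJ = 0 := by simpa using congrArg QuaternionAlgebra.imK h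
  have himI : p.imI = 0 := by
    linear_combination (-Complex.I) * hI + Complex.I * hre + p.imI * Complex.I_sq
  have himK : p.imK = Complex.I * p.imJ := by
    linear_combination (-Complex.I) * hK + p.imK * Complex.I_sq
  ext <;> simp [hre, himI, himK, mul_comm]

theorem fst_cs_mul_one_add_cs_mul_eps_mul (a x : ℂ) (n : DQ) :
    fst (cs a * (1 + cs x * ε) * n) = a • fst n := by
  simp [Quaternion.coe_mul_eq_smul]

theorem snd_cs_mul_one_add_cs_mul_eps_mul (a x : ℂ) {n : DQ} (hn : snd n = 0) :
    snd (cs a * (1 + cs x * ε) * n) = (a * x) • fst n := by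
  simp only [DualNumber.snd_mul, fst_mul, snd_add, snd_one, snd_eps, fst_eps, fst_cs, snd_cs, hn,
    mul_zero, zero_mul, add_zero, zero_add, mul_one]
  rw [← Quaternion.coe_mul, Quaternion.coe_mul_eq_smul]

/-- If `(I + 𝐢)q = 0`, the coefficients of `1` and `ε` in `q` vanish, the coefficient
of `𝐣` is nonzero, and `x₀ · (coefficient of 𝐣) = coefficient of ε𝐣`, then
`q = a(1 + x₀ε)(𝐣 + I𝐤)` for some nonzero `a ∈ ℂ`. -/
theorem normal_form_of_bond_factor (q : DQ) (x₀ : ℂ)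
    (hq : (cs Complex.I + qi) * q = 0)
    (h1 : (fst q).re = 0)
    (heps : (snd q).re = 0)
    (hj : (fst q).imJ ≠ 0)
    (hx : x₀ * (fst q).imJ = (snd q).imJ) :
    ∃ a : ℂ, a ≠ 0 ∧ q = cs a * (1 + cs x₀ * ε) * (qj + cs Complex.I * qk) := by
  obtain ⟨hfst, hsnd⟩ := (DualNumber.mul_eq_zero_iff_of_snd_eq_zero (by simp) q).1 hq
  refine ⟨(fst q).imJ, hj, TrivSqZeroExt.ext ?_ ?_⟩
  · rw [fst_cs_mul_one_add_cs_mul_eps_mul, ← eq_imJ_smul_of_I_add_i_mul_eq_zero hfst h1]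
  · rw [snd_cs_mul_one_add_cs_mul_eps_mul _ _ (by simp), mul_comm, hx,
      ← eq_imJ_smul_of_I_add_i_mul_eq_zero hsnd heps]
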